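/- The count n in the canonical rate function does not depend on the choice of the completely labeled version of t̄: if t̄⁺ and t̄⁺' are two completely labeled versions of the same term t̄, then the number of matching instantiations (as in the canonical rate definition) computed from t̄⁺ equals that computed from t̄⁺'. -/

import Mathlib

namespace CWC

/-- CWC simple terms over atoms `A`: an atom, or a compartment `(wrap ▹ content)`. -/
inductive Tm (A : Type) : Type where
  | atom : A → Tm A
  | comp : List A → List (Tm A) → Tm A

/-- Structural congruence on CWC terms (lists of simple terms): the least
equivalence relation generated by swapping adjacent elements and by the
congruence rule for compartments (closed under multiset union). -/
inductive Cong {A : Type} : List (Tm A) → List (Tm A) → Prop where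
  | refl (t : List (Tm A)) : Cong t t
  | symm {t u : List (Tm A)} : Cong t u → Cong u t
  | trans {t u v : List (Tm A)} : Cong t u → Cong u v → Cong t v
  | swap (t1 : List (Tm A)) (u w : Tm A) (t2 : List (Tm A)) :
      Cong (t1 ++ u :: w :: t2) (t1 ++ w :: u :: t2)
  | comp {a b : List A} {t u : List (Tm A)} :
      a.Perm b → Cong t u → Cong [Tm.comp a t] [Tm.comp b u]
  | app {t u v w : List (Tm A)} : Cong t u → Cong v w → Cong (t ++ v) (u ++ w)

/-- Simple terms up to structural congruence. -/
def tmSetoid (A : Type) : Setoid (Tm A) :=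
  ⟨fun t u => Cong [t] [u], ⟨fun t => .refl [t], .symm, .trans⟩⟩

/-- The multiset of congruence classes of the components of a term. -/
def clsM {A : Type} (t : List (Tm A)) : Multiset (Quotient (tmSetoid A)) :=
  (t.map (Quotient.mk (tmSetoid A)) : List (Quotient (tmSetoid A)))

/-- CWC contexts: a hole, or a compartment containing a context, in parallel
with a term. -/
inductive Ctx (A : Type) : Type where
  | hole : Ctx A
  | node : List A → Ctx A → List (Tm A) → Ctx A

/-- Filling the hole of a context with a term. -/
def Ctx.fill {A : Type} : Ctx A → List (Tm A) → List (Tm A)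
  | .hole, t => t
  | .node a C v, t => Tm.comp a (C.fill t) :: v

/-- Context composition: replacing the hole of the first context by the second. -/
def Ctx.comp {A : Type} : Ctx A → Ctx A → Ctx A
  | .hole, C' => C'
  | .node a C v, C' => .node a (C.comp C') v

/-- The number of holes of a context. -/
def Ctx.holes {A : Type} : Ctx A → Nat
  | .hole => 1
  | .node _ C _ => C.holes

/-- Open simple terms: atoms, term variables, and compartments whose wrap may
contain wrap variables. -/
inductive OT (A : Type) : Type where
  | atom : A → OT A
  | tvar : Nat → OT A
  | comp : List A → List Nat → List (OT A) → OT A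

/-- An instantiation maps term variables to terms and wrap variables to
multisets of atoms. -/
structure Inst (A : Type) where
  tv : Nat → List (Tm A)
  wv : Nat → List A

mutual
/-- Substitution on open simple terms. -/
def substS {A : Type} (σ : Inst A) : OT A → List (Tm A)
  | .atom a => [.atom a]
  | .tvar X => σ.tv X
  | .comp a xs os => [Tm.comp (a ++ xs.flatMap σ.wv) (substL σ os)]
/-- Substitution on open terms. -/
def substL {A : Type} (σ : Inst A) : List (OT A) → List (Tm A)
  | [] => []
  | o :: os => substS σ o ++ substL σ os
end

/-- A CWC system is a set of rewrite rules; the induced reduction relation is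
generated by rule application in arbitrary contexts, closed under structural
congruence. -/
inductive Red {A : Type} (R : Set (List (OT A) × List (OT A))) :
    List (Tm A) → List (Tm A) → Prop where
  | step {P O : List (OT A)} (σ : Inst A) (C : Ctx A) :
      (P, O) ∈ R → Red R (C.fill (substL σ P)) (C.fill (substL σ O))
  | congr {t t' u u' : List (Tm A)} :
      Cong t t' → Red R t' u' → Cong u' u → Red R t u

mutual
/-- The list of atom occurrences of a simple term. -/
def atomsS {A : Type} : Tm A → List A
  | .atom a => [a]
  | .comp w t => w ++ atomsL t
def atomsL {A : Type} : List (Tm A) → List A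
  | [] => []
  | t :: ts => atomsS t ++ atomsL ts
end

mutual
/-- The list of atom occurrences of an open simple term. -/
def atomsOS {A : Type} : OT A → List A
  | .atom a => [a]
  | .tvar _ => []
  | .comp w _ t => w ++ atomsOL t
def atomsOL {A : Type} : List (OT A) → List A
  | [] => []
  | o :: os => atomsOS o ++ atomsOL os
end

mutual
/-- The list of term-variable occurrences of an open simple term. -/
def tvarsS {A : Type} : OT A → List Nat
  | .atom _ => []
  | .tvar X => [X]
  | .comp _ _ t => tvarsL t
def tvarsL {A : Type} : List (OT A) → List Nat
  | [] => []
  | o :: os => tvarsS o ++ tvarsL os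
end

mutual
/-- The list of wrap-variable occurrences of an open simple term. -/
def wvarsS {A : Type} : OT A → List Nat
  | .atom _ => []
  | .tvar _ => []
  | .comp _ xs t => xs ++ wvarsL t
def wvarsL {A : Type} : List (OT A) → List Nat
  | [] => []
  | o :: os => wvarsS o ++ wvarsL os
end

/-- A pattern is linear when each variable occurs at most once in it. -/
def Linear {A : Type} (P : List (OT A)) : Prop :=
  (∀ X : Nat, (tvarsL P).count X ≤ 1) ∧ (∀ x : Nat, (wvarsL P).count x ≤ 1)

/-- A labelled term (atoms of the form `(a, i)`) is completely labelled when no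
two occurrences of the same atom carry the same label. -/
def CompletelyLabeled {A : Type} (t : List (Tm (A × Nat))) : Prop :=
  (atomsL t).Nodup

mutual
/-- `LabS t t⁺` : the labelled simple term `t⁺` is obtained from `t` by
assigning labels to its atoms. -/
inductive LabS {A : Type} : Tm A → Tm (A × Nat) → Prop where
  | atom (a : A) (i : Nat) : LabS (.atom a) (.atom (a, i))
  | comp {w : List A} {w' : List (A × Nat)} {t : List (Tm A)} {t' : List (Tm (A × Nat))} :
      w'.map Prod.fst = w → LabL t t' → LabS (.comp w t) (.comp w' t')
inductive LabL {A : Type} : List (Tm A) → List (Tm (A × Nat)) → Prop where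
  | nil : LabL [] []
  | cons {t : Tm A} {t' : Tm (A × Nat)} {ts : List (Tm A)} {ts' : List (Tm (A × Nat))} :
      LabS t t' → LabL ts ts' → LabL (t :: ts) (t' :: ts')
end

mutual
/-- Erasure of labels from a labelled simple term. -/
def eraseS {A : Type} : Tm (A × Nat) → Tm A
  | .atom p => .atom p.1
  | .comp w t => .comp (w.map Prod.fst) (eraseL t)
def eraseL {A : Type} : List (Tm (A × Nat)) → List (Tm A)
  | [] => []
  | t :: ts => eraseS t :: eraseL ts
end

mutual
/-- Labelling of open simple terms (variables are unaffected). -/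
inductive LabOS {A : Type} : OT A → OT (A × Nat) → Prop where
  | atom (a : A) (i : Nat) : LabOS (.atom a) (.atom (a, i))
  | tvar (X : Nat) : LabOS (.tvar X) (.tvar X)
  | comp {w : List A} {w' : List (A × Nat)} {xs : List Nat}
      {t : List (OT A)} {t' : List (OT (A × Nat))} :
      w'.map Prod.fst = w → LabOL t t' → LabOS (.comp w xs t) (.comp w' xs t')
inductive LabOL {A : Type} : List (OT A) → List (OT (A × Nat)) → Prop where
  | nil : LabOL [] []
  | cons {o : OT A} {o' : OT (A × Nat)} {os : List (OT A)} {os' : List (OT (A × Nat))} :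
      LabOS o o' → LabOL os os' → LabOL (o :: os) (o' :: os')
end

/-- Erasure of labels from an instantiation. -/
def eraseInst {A : Type} (σ : Inst (A × Nat)) : Inst A :=
  ⟨fun X => eraseL (σ.tv X), fun x => (σ.wv x).map Prod.fst⟩

/-- The set of matching instantiations used in the canonical (mass action) rate
function: instantiations `σ` of the variables of `P` by labelled terms such
that `P'σ ≡ t⁺` for some labelling `P'` of `P` and `|Oσ| ≡ u`. -/
def MatchSet {A : Type} (P O : List (OT A)) (tp : List (Tm (A × Nat)))
    (u : List (Tm A)) : Set (Inst (A × Nat)) :=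
  {σ | (∀ X : Nat, X ∉ tvarsL P → σ.tv X = []) ∧
       (∀ x : Nat, x ∉ wvarsL P → σ.wv x = []) ∧
       (∃ P' : List (OT (A × Nat)), LabOL P P' ∧ Cong (substL σ P') tp) ∧
       Cong (substL (eraseInst σ) O) u}


/-- Encoding of the right suffix of the tape (head symbol first), ended by the
right marker `r`: each compartment's wrap holds one tape symbol and its content
encodes the rest of the suffix. -/
def encR {A : Type} (r : A) : List A → Tm A
  | [] => Tm.comp [r] []
  | b :: bs => Tm.comp [b] [encR r bs]

/-- Nesting of the left portion of the tape (leftmost symbol outermost) around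
an inner term. -/
def nest {A : Type} : List A → List (Tm A) → List (Tm A)
  | [], inner => inner
  | s :: ls, inner => [Tm.comp [s] (nest ls inner)]

/-- Encoding of a Turing machine configuration with left tape `left` (leftmost
first), state `q`, head symbol `hd` and right tape `right`; `l`, `r` are the
end-of-tape markers. -/
def encConf {A : Type} (l r : A) (left : List A) (q hd : A) (right : List A) :
    List (Tm A) :=
  [Tm.comp [l] (nest left (Tm.atom q :: [encR r (hd :: right)]))]

/-- The CWC rule `q·(b·y ▹ (x ▹ Z)·Y)·X ↦ (c·y ▹ q'·(x ▹ Z)·Y)·X` encoding the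
machine transition `(q,b) → (q',c,right)` (nonempty right tape case), with wrap
variables `y = 0`, `x = 1` and term variables `Z = 0`, `Y = 1`, `X = 2`. -/
def tmRule {A : Type} (q b q' c : A) : List (OT A) × List (OT A) :=
  ([OT.atom q,
    OT.comp [b] [0] [OT.comp [] [1] [OT.tvar 0], OT.tvar 1],
    OT.tvar 2],
   [OT.comp [c] [0] [OT.atom q', OT.comp [] [1] [OT.tvar 0], OT.tvar 1],
    OT.tvar 2])

mutual
/-- Number of occurrences of state atoms (atoms in `Q`) in a simple term. -/
def stCountS {A : Type} (Q : A → Prop) [DecidablePred Q] : Tm A → Nat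
  | .atom a => if Q a then 1 else 0
  | .comp w t => (w.countP fun a => decide (Q a)) + stCountL Q t
def stCountL {A : Type} (Q : A → Prop) [DecidablePred Q] : List (Tm A) → Nat
  | [] => 0
  | t :: ts => stCountS Q t + stCountL Q ts
end

mutual
/-- Number of occurrences of state atoms in an open simple term. -/
def stCountOS {A : Type} (Q : A → Prop) [DecidablePred Q] : OT A → Nat
  | .atom a => if Q a then 1 else 0
  | .tvar _ => 0
  | .comp w _ t => (w.countP fun a => decide (Q a)) + stCountOL Q t
def stCountOL {A : Type} (Q : A → Prop) [DecidablePred Q] : List (OT A) → Nat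
  | [] => 0
  | o :: os => stCountOS Q o + stCountOL Q os
end

/-!
Both labellings list the same atoms in the same positions, each occurrence with a distinct label,
so a label-preserving permutation `π` of `A × ℕ` carries `t⁺` to `t⁺'`. Relabelling along `π`
commutes with substitution, structural congruence and erasure of labels, hence `σ ↦ π ∘ σ` maps
the matching instantiations from `t⁺` into those from `t⁺'`, with inverse `σ ↦ π⁻¹ ∘ σ`.
-/

section Relabel

variable {α β γ : Type}

mutual
def mapS (f : α → β) : Tm α → Tm β
  | .atom a => .atom (f a)
  | .comp w t => .comp (w.map f) (mapL f t)
def mapL (f : α → β) : List (Tm α) → List (Tm β)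
  | [] => []
  | t :: ts => mapS f t :: mapL f ts
end

theorem mapL_append (f : α → β) (t u : List (Tm α)) :
    mapL f (t ++ u) = mapL f t ++ mapL f u := by
  induction t with
  | nil => rfl
  | cons a t ih => simp [mapL, ih]

mutual
theorem mapS_mapS (g : β → γ) (f : α → β) : ∀ t : Tm α, mapS g (mapS f t) = mapS (g ∘ f) t
  | .atom _ => rfl
  | .comp w t => by simp [mapS, mapL_mapL g f t]
theorem mapL_mapL (g : β → γ) (f : α → β) :
    ∀ ts : List (Tm α), mapL g (mapL f ts) = mapL (g ∘ f) ts
  | [] => rfl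
  | t :: ts => by simp [mapL, mapS_mapS g f t, mapL_mapL g f ts]
end

mutual
theorem mapS_id : ∀ t : Tm α, mapS id t = t
  | .atom _ => rfl
  | .comp w t => by simp [mapS, mapL_id t]
theorem mapL_id : ∀ ts : List (Tm α), mapL id ts = ts
  | [] => rfl
  | t :: ts => by simp [mapL, mapS_id t, mapL_id ts]
end

mutual
theorem atomsS_mapS (f : α → β) : ∀ t : Tm α, atomsS (mapS f t) = (atomsS t).map f
  | .atom _ => rfl
  | .comp w t => by simp [mapS, atomsS, atomsL_mapL f t]
theorem atomsL_mapL (f : α → β) : ∀ ts : List (Tm α), atomsL (mapL f ts) = (atomsL ts).map f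
  | [] => rfl
  | t :: ts => by simp [mapL, atomsL, atomsS_mapS f t, atomsL_mapL f ts]
end

theorem Cong.map (f : α → β) {t u : List (Tm α)} (h : Cong t u) :
    Cong (mapL f t) (mapL f u) := by
  induction h with
  | refl t => exact .refl _
  | symm _ ih => exact .symm ih
  | trans _ _ ih₁ ih₂ => exact .trans ih₁ ih₂
  | swap t₁ v w t₂ =>
      simpa [mapL_append, mapL] using Cong.swap (mapL f t₁) (mapS f v) (mapS f w) (mapL f t₂)
  | comp hp _ ih => exact .comp (hp.map f) ih
  | app _ _ ih₁ ih₂ => simpa [mapL_append] using Cong.app ih₁ ih₂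

mutual
theorem eq_of_mapS_eq_of_atomsS_eq {g : α → β} :
    ∀ {t t' : Tm α}, mapS g t = mapS g t' → atomsS t = atomsS t' → t = t'
  | .atom _, .atom _, _, ha => by simpa [atomsS] using ha
  | .atom _, .comp _ _, h, _ | .comp _ _, .atom _, h, _ => by simp [mapS] at h
  | .comp w t, .comp w' t', h, ha => by
      simp only [mapS, Tm.comp.injEq] at h
      have hlen : w.length = w'.length := by simpa using congrArg List.length h.1
      obtain ⟨rfl, hat⟩ := List.append_inj ha hlen
      rw [eq_of_mapL_eq_of_atomsL_eq h.2 hat]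
theorem eq_of_mapL_eq_of_atomsL_eq {g : α → β} :
    ∀ {ts ts' : List (Tm α)}, mapL g ts = mapL g ts' → atomsL ts = atomsL ts' → ts = ts'
  | [], [], _, _ => rfl
  | [], _ :: _, h, _ | _ :: _, [], h, _ => by simp [mapL] at h
  | t :: ts, t' :: ts', h, ha => by
      simp only [mapL, List.cons.injEq] at h
      have hlen : (atomsS t).length = (atomsS t').length := by
        simpa [atomsS_mapS] using congrArg (List.length ∘ atomsS) h.1
      obtain ⟨h₁, h₂⟩ := List.append_inj ha hlen
      rw [eq_of_mapS_eq_of_atomsS_eq h.1 h₁, eq_of_mapL_eq_of_atomsL_eq h.2 h₂]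
end

mutual
def mapOS (f : α → β) : OT α → OT β
  | .atom a => .atom (f a)
  | .tvar X => .tvar X
  | .comp w xs t => .comp (w.map f) xs (mapOL f t)
def mapOL (f : α → β) : List (OT α) → List (OT β)
  | [] => []
  | o :: os => mapOS f o :: mapOL f os
end

def Inst.map (f : α → β) (σ : Inst α) : Inst β :=
  ⟨fun X => mapL f (σ.tv X), fun x => (σ.wv x).map f⟩

theorem Inst.map_map (g : β → γ) (f : α → β) (σ : Inst α) :
    (σ.map f).map g = σ.map (g ∘ f) := by
  simp [Inst.map, mapL_mapL]

theorem Inst.map_id (σ : Inst α) : σ.map id = σ := by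
  simp [Inst.map, mapL_id]

mutual
theorem substS_mapOS (f : α → β) (σ : Inst α) :
    ∀ o : OT α, substS (σ.map f) (mapOS f o) = mapL f (substS σ o)
  | .atom _ => rfl
  | .tvar _ => rfl
  | .comp w xs os => by
      simp only [mapOS, substS, substL_mapOL f σ os]
      simp [mapL, mapS, Inst.map, List.map_flatMap]
theorem substL_mapOL (f : α → β) (σ : Inst α) :
    ∀ os : List (OT α), substL (σ.map f) (mapOL f os) = mapL f (substL σ os)
  | [] => rfl
  | o :: os => by simp [mapOL, substL, mapL_append, substS_mapOS f σ o, substL_mapOL f σ os]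
end

end Relabel

section Labelling

variable {A : Type}

mutual
theorem eraseS_eq_mapS : ∀ t : Tm (A × ℕ), eraseS t = mapS Prod.fst t
  | .atom _ => rfl
  | .comp w t => by simp [eraseS, mapS, eraseL_eq_mapL t]
theorem eraseL_eq_mapL : ∀ ts : List (Tm (A × ℕ)), eraseL ts = mapL Prod.fst ts
  | [] => rfl
  | t :: ts => by simp [eraseL, mapL, eraseS_eq_mapS t, eraseL_eq_mapL ts]
end

theorem eraseInst_eq_map (σ : Inst (A × ℕ)) : eraseInst σ = σ.map Prod.fst := by
  simp [eraseInst, Inst.map, eraseL_eq_mapL]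

theorem eraseInst_map {f : A × ℕ → A × ℕ} (hf : Prod.fst ∘ f = Prod.fst) (σ : Inst (A × ℕ)) :
    eraseInst (σ.map f) = eraseInst σ := by
  rw [eraseInst_eq_map, eraseInst_eq_map, Inst.map_map, hf]

mutual
theorem LabS.mapS_fst {t : Tm A} {t' : Tm (A × ℕ)} : LabS t t' → mapS Prod.fst t' = t
  | .atom _ _ => rfl
  | .comp hw ht => by rw [mapS, hw, ht.mapL_fst]
theorem LabL.mapL_fst {ts : List (Tm A)} {ts' : List (Tm (A × ℕ))} :
    LabL ts ts' → mapL Prod.fst ts' = ts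
  | .nil => rfl
  | .cons ht hts => by rw [mapL, ht.mapS_fst, hts.mapL_fst]
end

mutual
theorem LabOS.mapOS {f : A × ℕ → A × ℕ} (hf : Prod.fst ∘ f = Prod.fst) {o : OT A}
    {o' : OT (A × ℕ)} : LabOS o o' → LabOS o (mapOS f o')
  | .atom a i => by
      have hfi : f (a, i) = (a, (f (a, i)).2) := Prod.ext (congrFun hf (a, i)) rfl
      rw [mapOS, hfi]
      exact .atom a _
  | .tvar X => .tvar X
  | .comp hw ho => .comp (by rw [List.map_map, hf, hw]) (ho.mapOL hf)
theorem LabOL.mapOL {f : A × ℕ → A × ℕ} (hf : Prod.fst ∘ f = Prod.fst) {os : List (OT A)}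
    {os' : List (OT (A × ℕ))} : LabOL os os' → LabOL os (mapOL f os')
  | .nil => .nil
  | .cons ho hos => .cons (ho.mapOS hf) (hos.mapOL hf)
end

end Labelling

theorem exists_perm_map_eq_of_map_eq {α β : Type} {g : α → β} :
    ∀ {l l' : List α}, l.map g = l'.map g → l.Nodup → l'.Nodup →
      ∃ π : Equiv.Perm α, g ∘ π = g ∧ l.map π = l'
  | [], [], _, _, _ => ⟨1, rfl, rfl⟩
  | [], _ :: _, h, _, _ | _ :: _, [], h, _, _ => by simp at h
  | x :: l, x' :: l', h, hl, hl' => by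
      classical
      simp only [List.map_cons, List.cons.injEq] at h
      obtain ⟨ρ, hρ, hρl⟩ := exists_perm_map_eq_of_map_eq h.2 hl.of_cons hl'.of_cons
      refine ⟨Equiv.swap (ρ x) x' * ρ, ?_, ?_⟩
      · have hswap : g ∘ Equiv.swap (ρ x) x' = g := by
          funext y
          have hx : g (ρ x) = g x' := (congrFun hρ x).trans h.1
          rcases eq_or_ne y (ρ x) with rfl | h₁
          · simp [hx]
          rcases eq_or_ne y x' with rfl | h₂
          · simp [hx]
          · simp [Equiv.swap_apply_of_ne_of_ne h₁ h₂]
        rw [Equiv.Perm.coe_mul, ← Function.comp_assoc, hswap, hρ]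
      · simp only [List.map_cons, Equiv.Perm.mul_apply, Equiv.swap_apply_left, List.cons.injEq,
          true_and]
        rw [← hρl]
        refine List.map_congr_left fun y hy => Equiv.swap_apply_of_ne_of_ne ?_ ?_
        · exact fun hxy => (List.nodup_cons.mp hl).1 (ρ.injective hxy ▸ hy)
        · exact fun hyx => (List.nodup_cons.mp hl').1 (hρl ▸ hyx ▸ List.mem_map_of_mem hy)

section MatchSet

variable {A : Type} (P O : List (OT A)) (tp : List (Tm (A × ℕ))) (u : List (Tm A))

theorem mapsTo_matchSet {f : A × ℕ → A × ℕ} (hf : Prod.fst ∘ f = Prod.fst) :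
    Set.MapsTo (Inst.map f) (MatchSet P O tp u) (MatchSet P O (mapL f tp) u) := by
  rintro σ ⟨htv, hwv, ⟨P', hP', hcong⟩, hO⟩
  refine ⟨fun X hX => by simp [Inst.map, htv X hX, mapL], fun x hx => by simp [Inst.map, hwv x hx],
    ⟨mapOL f P', hP'.mapOL hf, ?_⟩, by rwa [eraseInst_map hf]⟩
  rw [substL_mapOL]
  exact hcong.map f

theorem ncard_matchSet_mapL (π : Equiv.Perm (A × ℕ)) (hπ : Prod.fst ∘ π = Prod.fst) :
    (MatchSet P O tp u).ncard = (MatchSet P O (mapL π tp) u).ncard := by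
  have hπ' : Prod.fst ∘ π.symm = Prod.fst := by
    conv_lhs => rw [← hπ]
    rw [Function.comp_assoc, π.self_comp_symm, Function.comp_id]
  have hback : mapL π.symm (mapL π tp) = tp := by rw [mapL_mapL, π.symm_comp_self, mapL_id]
  have hinv : Set.InvOn (Inst.map π.symm) (Inst.map π) (MatchSet P O tp u)
      (MatchSet P O (mapL π tp) u) :=
    ⟨fun σ _ => by rw [Inst.map_map, π.symm_comp_self, Inst.map_id],
      fun σ _ => by rw [Inst.map_map, π.self_comp_symm, Inst.map_id]⟩
  have hsymm := mapsTo_matchSet P O (mapL π tp) u hπ'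
  rw [hback] at hsymm
  exact (hinv.bijOn (mapsTo_matchSet P O tp u hπ) hsymm).ncard_eq

end MatchSet

/-- The count in the canonical rate function does not depend on the choice of
the completely labelled version of `t`. -/
theorem canonical_count_independent {A : Type} (P O : List (OT A))
    (t u : List (Tm A)) (tp tp' : List (Tm (A × Nat)))
    (h1 : LabL t tp) (h1' : CompletelyLabeled tp)
    (h2 : LabL t tp') (h2' : CompletelyLabeled tp') :
    (MatchSet P O tp u).ncard = (MatchSet P O tp' u).ncard := by
  obtain ⟨π, hπ, hatoms⟩ := exists_perm_map_eq_of_map_eq (g := Prod.fst)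
    (l := atomsL tp) (l' := atomsL tp')
    (by rw [← atomsL_mapL, ← atomsL_mapL, h1.mapL_fst, h2.mapL_fst]) h1' h2'
  have hπtp : mapL π tp = tp' :=
    eq_of_mapL_eq_of_atomsL_eq (g := Prod.fst) (by rw [mapL_mapL, hπ, h1.mapL_fst, h2.mapL_fst])
      (by rw [atomsL_mapL, hatoms])
  rw [← hπtp]
  exact ncard_matchSet_mapL P O tp u π hπ

end CWC
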